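/- Let T = {t_1 < ... < t_m}, Q : T × T → ℝ with Q(t,t_x) − Q(t,t_{x−1}) weakly increasing in t for each x, and p defined by p(t_i) = p(t_1) + Σ_{y=2}^{i} (Q(t_y,t_y) − Q(t_y,t_{y−1})). Then for all i < i': p(t_{i'}) − p(t_i) ≥ Q(t_i, t_{i'}) − Q(t_i, t_i), i.e., the upward IC constraints hold as well. -/

import Mathlib

open Finset

theorem Finset.sum_Ioc_sub_pred {M : Type*} [AddCommGroup M] (f : ℕ → M) {a b : ℕ} (hab : a ≤ b) :
    ∑ y ∈ Ioc a b, (f y - f (y - 1)) = f b - f a := by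
  induction b, hab using Nat.le_induction with
  | base => simp
  | succ b hab ih => rw [sum_Ioc_succ_top hab, ih, Nat.add_sub_cancel, sub_add_sub_cancel']

lemma sub_eq_sum_Ioc_of_eq_add_sum_Icc {M : Type*} [AddCommGroup M] {m : ℕ} (g p : ℕ → M)
    (hp : ∀ i < m, p i = p 0 + ∑ y ∈ Icc 1 i, g y) {i i' : ℕ} (hii' : i ≤ i') (hi' : i' < m) :
    p i' - p i = ∑ y ∈ Ioc i i', g y := by
  have Icc_one_eq_Ioc_zero (n : ℕ) : Icc 1 n = Ioc 0 n := Icc_add_one_left_eq_Ioc 0 n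
  rw [hp i (by omega), hp i' hi', Icc_one_eq_Ioc_zero, Icc_one_eq_Ioc_zero,
    ← sum_Ioc_consecutive _ (Nat.zero_le i) hii']
  abel

/-- Upward IC constraints hold for prices defined from consecutive constraints, given
that `Q` has increasing differences. -/
theorem stmt7 (m : ℕ) (Q : ℕ → ℕ → ℝ) (p : ℕ → ℝ)
    (hID : ∀ x, 0 < x → x < m → ∀ i i', i ≤ i' → i' < m →
      Q i x - Q i (x - 1) ≤ Q i' x - Q i' (x - 1))
    (hp : ∀ i < m, p i = p 0 + ∑ y ∈ Finset.Icc 1 i, (Q y y - Q y (y - 1))) :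
    ∀ i i', i < i' → i' < m → Q i i' - Q i i ≤ p i' - p i := by
  intro i i' hii' hi'
  calc Q i i' - Q i i = ∑ y ∈ Ioc i i', (Q i y - Q i (y - 1)) :=
        (sum_Ioc_sub_pred (Q i) hii'.le).symm
    _ ≤ ∑ y ∈ Ioc i i', (Q y y - Q y (y - 1)) := by
        refine sum_le_sum fun y hy => ?_
        rw [mem_Ioc] at hy
        exact hID y (by omega) (by omega) i y hy.1.le (by omega)
    _ = p i' - p i := (sub_eq_sum_Ioc_of_eq_add_sum_Icc _ p hp hii'.le hi').symm
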